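/- Let G be a simple graph with maximum degree Δ ≥ 3 containing two adjacent vertices u and v both of degree 2. If G − u admits a (Δ+2, 2)-incidence coloring, then G admits a (Δ+2, 2)-incidence coloring. -/

import Mathlib

/-- An incidence of `G` is a pair `(v, vw)` with `G.Adj v w`, encoded as the ordered pair
`(v, w)`.  Two incidences `(v, vw)` and `(v', v'w')` are adjacent if `v = v'`, `w = v'`
or `v = w'`.  A `(k, l)`-incidence coloring is a proper coloring of the incidences with at
most `k` colors such that for every vertex `v` at most `l` colors appear on the incoming
incidences `(u, uv)`. -/
def IsIncColoring {V : Type*} (G : SimpleGraph V) (k l : ℕ) (c : V → V → Fin k) : Prop :=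
  (∀ v w v' w' : V, G.Adj v w → G.Adj v' w' → (v, w) ≠ (v', w') →
      (v = v' ∨ w = v' ∨ v = w') → c v w ≠ c v' w') ∧
  (∀ v : V, {x : Fin k | ∃ u, G.Adj u v ∧ c u v = x}.ncard ≤ l)

/-- `G` has a `(k, l)`-incidence coloring. -/
def HasIncColoring {V : Type*} (G : SimpleGraph V) (k l : ℕ) : Prop :=
  ∃ c : V → V → Fin k, IsIncColoring G k l c

/-- A graph is outerplanar iff it has a one-page book embedding: the vertices can be placed
(injectively) on a line so that no two edges interleave. -/
def Outerplanar {V : Type*} (G : SimpleGraph V) : Prop :=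
  ∃ f : V → ℝ, Function.Injective f ∧
    ∀ a b c d : V, G.Adj a b → G.Adj c d →
      ¬(f a < f c ∧ f c < f b ∧ f b < f d)

/-!
Colour `G - u` and give new colours only to the four incidences at `u`. Write `N(u) = {v, w}`
and `N(v) = {u, z}`. Colour `(u, w)` by a colour `a` already entering `w` (any colour not leaving
`w` if none enters), so that `w` still sees at most two incoming colours; `(w, u)` by a colour `b`
avoiding the at most `Δ - 1` colours leaving `w` and the at most two entering it; `(v, u)` by a
colour `q` avoiding `c(v, z)`, `c(z, v)` and `a`; and `(u, v)` by a colour `p` avoiding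
`c(v, z)`, `q`, `a` and `b`, which is where `Δ + 2 > 4` is needed. Properness of an incidence
colouring is a condition at each vertex separately, so only `u`, `v` and `w` need checking.
-/

section

variable {V : Type*} {k l : ℕ}

/-- `N` stands for the neighbourhood of `x`: `c x '' N` are the colours leaving `x` and
`(c · x) '' N` those entering it. -/
def IncColoringAt (l : ℕ) (c : V → V → Fin k) (x : V) (N : Set V) : Prop :=
  Set.InjOn (c x) N ∧ Disjoint ((c · x) '' N) (c x '' N) ∧ ((c · x) '' N).ncard ≤ l

-- Adjacent incidences share a vertex that both leave, or that one enters and the other leaves.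
theorem isIncColoring_iff_forall_incColoringAt {G : SimpleGraph V} {c : V → V → Fin k} :
    IsIncColoring G k l c ↔ ∀ x, IncColoringAt l c x (G.neighborSet x) := by
  have hin : ∀ x, {col | ∃ y, G.Adj y x ∧ c y x = col} = (c · x) '' G.neighborSet x := by
    intro x; ext col; simp [G.adj_comm]
  constructor
  · rintro ⟨hproper, hcount⟩ x
    refine ⟨fun y hy y' hy' hyy' => ?_, Set.disjoint_left.mpr ?_, hin x ▸ hcount x⟩
    · by_contra hne
      exact hproper x y x y' hy hy' (by simpa using hne) (.inl rfl) hyy'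
    · rintro _ ⟨y, hy, rfl⟩ ⟨y', hy', hyy'⟩
      exact hproper y x x y' hy.symm hy' (fun h => hy.ne' (Prod.ext_iff.mp h).1) (.inr (.inl rfl))
        hyy'.symm
  · intro h
    refine ⟨?_, fun x => hin x ▸ (h x).2.2⟩
    rintro v w v' w' hvw hv'w' hne (rfl | rfl | rfl) hcol
    · exact hne (by rw [(h v).1 hvw hv'w' hcol])
    · exact Set.disjoint_left.mp (h w).2.1 ⟨v, hvw.symm, rfl⟩ ⟨w', hv'w', hcol.symm⟩
    · exact Set.disjoint_left.mp (h v).2.1 ⟨v', hv'w'.symm, rfl⟩ ⟨w, hvw, hcol⟩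

theorem IncColoringAt.congr {c c' : V → V → Fin k} {x : V} {N : Set V}
    (h : IncColoringAt l c x N) (hout : ∀ y ∈ N, c' x y = c x y)
    (hin : ∀ y ∈ N, c' y x = c y x) :
    IncColoringAt l c' x N := by
  have hout' : c' x '' N = c x '' N := Set.image_congr hout
  have hin' : (c' · x) '' N = (c · x) '' N := Set.image_congr hin
  exact ⟨h.1.congr fun y hy => (hout y hy).symm, hin' ▸ hout' ▸ h.2.1, hin' ▸ h.2.2⟩

theorem IncColoringAt.insert {c : V → V → Fin k} {x y : V} {N : Set V}
    (h : IncColoringAt l c x N) (hout : c x y ∉ c x '' N ∪ (c · x) '' N)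
    (hin : c y x ∉ insert (c x y) (c x '' N))
    (hcard : (insert (c y x) ((c · x) '' N)).ncard ≤ l) :
    IncColoringAt l c x (insert y N) := by
  have hy : y ∉ N := fun hy => hout (.inl ⟨y, hy, rfl⟩)
  rw [IncColoringAt, Set.injOn_insert hy, Set.image_insert_eq, Set.image_insert_eq,
    Set.disjoint_insert_left, Set.disjoint_insert_right]
  simp only [Set.mem_union, not_or] at hout
  exact ⟨⟨h.1, hout.1⟩, ⟨hin, hout.2, h.2.1⟩, hcard⟩

theorem IsIncColoring.map {W : Type*} [Nonempty W] {H : SimpleGraph W} {c : W → W → Fin k}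
    (hc : IsIncColoring H k l c) (f : W ↪ V) :
    IsIncColoring (H.map f) k l (fun a b => c (Function.invFun f a) (Function.invFun f b)) := by
  have hinv : ∀ x, Function.invFun f (f x) = x := Function.leftInverse_invFun f.injective
  refine ⟨?_, fun b => ?_⟩
  · rintro _ _ _ _ ⟨-, x, y, hxy, rfl, rfl⟩ ⟨-, x', y', hx'y', rfl, rfl⟩ hne hrel
    simp only [hinv, f.injective.eq_iff] at hrel ⊢
    exact hc.1 x y x' y' hxy hx'y' (fun h => hne (congrArg (Prod.map f f) h)) hrel
  · refine (Set.ncard_le_ncard ?_ (Set.toFinite _)).trans (hc.2 (Function.invFun f b))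
    rintro _ ⟨_, ⟨-, x, y, hxy, rfl, rfl⟩, rfl⟩
    exact ⟨x, by simpa only [hinv] using hxy, by simp only [hinv]⟩

theorem HasIncColoring.deleteIncidenceSet_of_induce [Nontrivial V] {G : SimpleGraph V} {u : V}
    (h : HasIncColoring (G.induce {x | x ≠ u}) k l) :
    HasIncColoring (G.deleteIncidenceSet u) k l := by
  obtain ⟨v, hv⟩ := exists_ne u
  have : Nonempty {x | x ≠ u} := ⟨⟨v, hv⟩⟩
  obtain ⟨c, hc⟩ := h
  have hG : (G.induce {x | x ≠ u}).spanningCoe = G.deleteIncidenceSet u := by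
    ext a b
    simp [SimpleGraph.deleteIncidenceSet_adj]
  exact hG ▸ ⟨_, hc.map _⟩

theorem SimpleGraph.neighborSet_deleteIncidenceSet (G : SimpleGraph V) {u x : V} (hx : x ≠ u) :
    (G.deleteIncidenceSet u).neighborSet x = G.neighborSet x \ {u} := by
  ext y
  simp [SimpleGraph.deleteIncidenceSet_adj, hx]

theorem SimpleGraph.ncard_neighborSet_deleteIncidenceSet [Fintype V] (G : SimpleGraph V)
    [DecidableRel G.Adj] {u x : V} (hx : G.Adj u x) :
    ((G.deleteIncidenceSet u).neighborSet x).ncard = G.degree x - 1 := by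
  rw [G.neighborSet_deleteIncidenceSet hx.ne',
    Set.ncard_sdiff_singleton_of_mem (show u ∈ G.neighborSet x from hx.symm),
    Set.ncard_eq_toFinset_card', Set.toFinset_card, G.card_neighborSet_eq_degree]

section Extension

variable {G : SimpleGraph V} {u : V} {c c' : V → V → Fin k}

theorem incColoringAt_deleteIncidenceSet (hc : IsIncColoring (G.deleteIncidenceSet u) k l c)
    (hagree : ∀ x y, x ≠ u → y ≠ u → c' x y = c x y) {x : V} (hx : x ≠ u) :
    IncColoringAt l c' x ((G.deleteIncidenceSet u).neighborSet x) := by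
  have hne : ∀ y ∈ (G.deleteIncidenceSet u).neighborSet x, y ≠ u := fun y hy =>
    (SimpleGraph.deleteIncidenceSet_adj.mp hy).2.2
  exact (isIncColoring_iff_forall_incColoringAt.mp hc x).congr
    (fun y hy => hagree x y hx (hne y hy)) (fun y hy => hagree y x (hne y hy) hx)

theorem incColoringAt_of_adj_deleteIncidenceSet
    (hc : IsIncColoring (G.deleteIncidenceSet u) k l c)
    (hagree : ∀ x y, x ≠ u → y ≠ u → c' x y = c x y) {x : V} (hx : G.Adj u x)
    (hout : c' x u ∉ c x '' (G.deleteIncidenceSet u).neighborSet x ∪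
      (c · x) '' (G.deleteIncidenceSet u).neighborSet x)
    (hin : c' u x ∉ insert (c' x u) (c x '' (G.deleteIncidenceSet u).neighborSet x))
    (hcard : (insert (c' u x) ((c · x) '' (G.deleteIncidenceSet u).neighborSet x)).ncard ≤ l) :
    IncColoringAt l c' x (G.neighborSet x) := by
  have hN : G.neighborSet x = insert u ((G.deleteIncidenceSet u).neighborSet x) := by
    rw [G.neighborSet_deleteIncidenceSet hx.ne', Set.insert_sdiff_singleton,
      Set.insert_eq_of_mem (show u ∈ G.neighborSet x from hx.symm)]
  have hout' : c' x '' (G.deleteIncidenceSet u).neighborSet x =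
      c x '' (G.deleteIncidenceSet u).neighborSet x :=
    Set.image_congr fun y hy => hagree x y hx.ne' (SimpleGraph.deleteIncidenceSet_adj.mp hy).2.2
  have hin' : (c' · x) '' (G.deleteIncidenceSet u).neighborSet x =
      (c · x) '' (G.deleteIncidenceSet u).neighborSet x :=
    Set.image_congr fun y hy => hagree y x (SimpleGraph.deleteIncidenceSet_adj.mp hy).2.2 hx.ne'
  rw [hN]
  exact (incColoringAt_deleteIncidenceSet hc hagree hx.ne').insert (hout' ▸ hin' ▸ hout)
    (hout' ▸ hin) (hin' ▸ hcard)

theorem isIncColoring_of_deleteIncidenceSet (hc : IsIncColoring (G.deleteIncidenceSet u) k l c)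
    (hagree : ∀ x y, x ≠ u → y ≠ u → c' x y = c x y)
    (hu : IncColoringAt l c' u (G.neighborSet u))
    (hnbr : ∀ x, G.Adj u x → IncColoringAt l c' x (G.neighborSet x)) :
    IsIncColoring G k l c' := by
  refine isIncColoring_iff_forall_incColoringAt.mpr fun x => ?_
  by_cases hxu : x = u
  · exact hxu ▸ hu
  by_cases hadj : G.Adj u x
  · exact hnbr x hadj
  have hN : G.neighborSet x = (G.deleteIncidenceSet u).neighborSet x := by
    rw [G.neighborSet_deleteIncidenceSet hxu, Set.sdiff_singleton_eq_self fun h => hadj h.symm]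
  exact hN ▸ incColoringAt_deleteIncidenceSet hc hagree hxu

end Extension

theorem SimpleGraph.exists_neighborSet_eq_pair (G : SimpleGraph V) {x y : V}
    [Fintype (G.neighborSet x)] (hx : G.degree x = 2) (hxy : G.Adj x y) :
    ∃ z, z ≠ y ∧ G.neighborSet x = {y, z} := by
  classical
  have hy : y ∈ G.neighborFinset x := (G.mem_neighborFinset x y).mpr hxy
  obtain ⟨z, hz⟩ : ∃ z, (G.neighborFinset x).erase y = {z} := Finset.card_eq_one.mp (by
    rw [Finset.card_erase_of_mem hy, G.card_neighborFinset_eq_degree, hx])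
  refine ⟨z, (Finset.mem_erase.mp (hz ▸ Finset.mem_singleton_self z)).1, ?_⟩
  rw [← G.coe_neighborFinset, ← Finset.insert_erase hy, hz, Finset.coe_insert,
    Finset.coe_singleton]

theorem Fin.exists_notMem_of_ncard_lt (S : Set (Fin k)) (h : S.ncard < k) : ∃ x, x ∉ S :=
  (Set.ne_univ_iff_exists_notMem S).mp fun hS => by simp [hS] at h

theorem Fin.exists_notMem_ncard_insert_le {O I : Set (Fin k)} (hIO : Disjoint I O)
    (hO : O.ncard < k) (hI : I.ncard ≤ l) (hl : 1 ≤ l) :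
    ∃ a ∉ O, (insert a I).ncard ≤ l := by
  obtain ⟨a, ha⟩ | rfl := I.eq_empty_or_nonempty.symm
  · exact ⟨a, hIO.notMem_of_mem_left ha, by rwa [Set.insert_eq_of_mem ha]⟩
  · obtain ⟨a, ha⟩ := Fin.exists_notMem_of_ncard_lt O hO
    exact ⟨a, ha, by simpa using hl⟩

/-- `p, a, q, b` are the colours given to `(u, v), (u, w), (v, u), (w, u)`. -/
theorem hasIncColoring_of_deleteIncidenceSet_of_colors {G : SimpleGraph V}
    {u v w z : V} {c : V → V → Fin k} (hc : IsIncColoring (G.deleteIncidenceSet u) k l c)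
    (hl : 2 ≤ l) (hNu : G.neighborSet u = {v, w}) (hwv : w ≠ v)
    (hNv : G.neighborSet v = {u, z}) (hzu : z ≠ u) {p a q b : Fin k}
    (ha : a ∉ c w '' (G.deleteIncidenceSet u).neighborSet w)
    (haI : (insert a ((c · w) '' (G.deleteIncidenceSet u).neighborSet w)).ncard ≤ l)
    (hb : b ∉ c w '' (G.deleteIncidenceSet u).neighborSet w ∪
      insert a ((c · w) '' (G.deleteIncidenceSet u).neighborSet w))
    (hq : q ∉ ({c v z, c z v, a} : Set (Fin k))) (hp : p ∉ ({c v z, q, a, b} : Set (Fin k))) :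
    HasIncColoring G k l := by
  classical
  have huv : G.Adj u v := show v ∈ G.neighborSet u by simp [hNu]
  have huw : G.Adj u w := show w ∈ G.neighborSet u by simp [hNu]
  have hNv' : (G.deleteIncidenceSet u).neighborSet v = {z} := by
    rw [G.neighborSet_deleteIncidenceSet huv.ne', hNv,
      Set.insert_sdiff_self_of_notMem (by simpa using hzu.symm)]
  have hab : a ≠ b := fun h => hb (.inr (.inl h.symm))
  have hpair : ∀ x y : Fin k, ({x, y} : Set (Fin k)).ncard ≤ l := fun x y =>
    (Set.ncard_insert_le _ _).trans (by rw [Set.ncard_singleton]; omega)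
  simp only [Set.mem_insert_iff, Set.mem_singleton_iff, not_or] at hq hp
  let c' x y := if x = u then (if y = v then p else a) else if y = u then (if x = v then q else b)
    else c x y
  have hagree : ∀ x y, x ≠ u → y ≠ u → c' x y = c x y := fun x y hx hy => by
    simp [c', hx, hy]
  have hv : IncColoringAt l c' v (G.neighborSet v) := by
    apply incColoringAt_of_adj_deleteIncidenceSet hc hagree huv <;>
      simp [hNv', c', huv.ne', hq, hp, hpair]
  have hw : IncColoringAt l c' w (G.neighborSet w) := by
    have hwu : c' w u = b := by simp [c', huw.ne', hwv]
    have huw' : c' u w = a := by simp [c', hwv]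
    refine incColoringAt_of_adj_deleteIncidenceSet hc hagree huw (hwu ▸ ?_) (huw' ▸ hwu ▸ ?_)
      (huw' ▸ haI)
    · exact fun h => hb (Set.union_subset_union_right _ (Set.subset_insert _ _) h)
    · exact Set.mem_insert_iff.not.mpr (not_or.mpr ⟨hab, ha⟩)
  refine ⟨c', isIncColoring_of_deleteIncidenceSet hc hagree ?_ fun x hx => ?_⟩
  · rw [hNu]
    simp [IncColoringAt, Set.image_insert_eq, c', hwv, huv.ne', huw.ne', hp, hab,
      Ne.symm hq.2.2, hpair]
  · rcases (show x ∈ ({v, w} : Set V) from hNu ▸ hx) with rfl | rfl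
    exacts [hv, hw]

end

theorem stmt_5_general {V : Type*} [Fintype V] (G : SimpleGraph V)
    [DecidableRel G.Adj] (u v : V) (hΔ : 3 ≤ G.maxDegree)
    (huv : G.Adj u v) (hdu : G.degree u = 2) (hdv : G.degree v = 2)
    (h : HasIncColoring (G.induce {x | x ≠ u}) (G.maxDegree + 2) 2) :
    HasIncColoring G (G.maxDegree + 2) 2 := by
  obtain ⟨w, hwv, hNu⟩ := G.exists_neighborSet_eq_pair hdu huv
  obtain ⟨z, hzu, hNv⟩ := G.exists_neighborSet_eq_pair hdv huv.symm
  have huw : G.Adj u w := show w ∈ G.neighborSet u by simp [hNu]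
  have : Nontrivial V := ⟨⟨u, v, huv.ne⟩⟩
  obtain ⟨c, hc⟩ := h.deleteIncidenceSet_of_induce
  obtain ⟨-, hIO, hI⟩ := isIncColoring_iff_forall_incColoringAt.mp hc w
  set N := (G.deleteIncidenceSet u).neighborSet w
  have hO : (c w '' N).ncard ≤ G.maxDegree - 1 :=
    (Set.ncard_image_le (Set.toFinite _)).trans
      ((G.ncard_neighborSet_deleteIncidenceSet huw).trans_le
        (Nat.sub_le_sub_right (G.degree_le_maxDegree w) 1))
  obtain ⟨a, ha, haI⟩ := Fin.exists_notMem_ncard_insert_le hIO (by omega) hI (by norm_num)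
  obtain ⟨b, hb⟩ := Fin.exists_notMem_of_ncard_lt (c w '' N ∪ insert a ((c · w) '' N))
    ((Set.ncard_union_le _ _).trans_lt (by omega))
  obtain ⟨q, hq⟩ := Fin.exists_notMem_of_ncard_lt {c v z, c z v, a}
    ((Set.ncard_insert_le _ _).trans_lt (by grw [Set.ncard_insert_le, Set.ncard_singleton]; omega))
  obtain ⟨p, hp⟩ := Fin.exists_notMem_of_ncard_lt {c v z, q, a, b}
    ((Set.ncard_insert_le _ _).trans_lt
      (by grw [Set.ncard_insert_le, Set.ncard_insert_le, Set.ncard_singleton]; omega))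
  exact hasIncColoring_of_deleteIncidenceSet_of_colors hc le_rfl hNu hwv hNv hzu ha haI hb hq hp

/-- If Δ ≥ 3, u and v are adjacent vertices of degree 2, and G - u has a
(Δ+2,2)-incidence coloring, then so does G. -/
theorem stmt_5 {V : Type*} [Fintype V] [DecidableEq V] (G : SimpleGraph V)
    [DecidableRel G.Adj] (u v : V) (hΔ : 3 ≤ G.maxDegree)
    (huv : G.Adj u v) (hdu : G.degree u = 2) (hdv : G.degree v = 2)
    (h : HasIncColoring (G.induce {x | x ≠ u}) (G.maxDegree + 2) 2) :
    HasIncColoring G (G.maxDegree + 2) 2 :=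
  stmt_5_general G u v hΔ huv hdu hdv h
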